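/- Let X and Z be random variables on a probability space with P(Z > 0) > 0, and let N be a standard normal random variable. Then for every ε > 0, sup_{z ∈ ℝ} |P(X/Z ≤ z) - P(N ≤ z)| ≤ sup_{z ∈ ℝ} |P(X ≤ z) - P(N ≤ z)| + P(|Z - 1| > ε) + ε. -/

import Mathlib

/-!
On the event `|Z - 1| ≤ ε < 1` the event `X / Z ≤ z` lies between `X ≤ z - ε|z|` and
`X ≤ z + ε|z|`. Comparing with the normal CDF at these shifted points costs the Kolmogorov
distance of `X` plus `P(|Z - 1| > ε)`, and moving the normal CDF from `z ± ε|z|` back to `z`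
costs at most `ε`: for `ε < 1/2` because the density satisfies `|t| φ(t) ≤ 1/4`, and for
`ε ≥ 1/2` because both points lie on the same side of the median `0`. For `ε ≥ 1` the bound
is trivial.
-/

open MeasureTheory ProbabilityTheory Set Real NNReal

namespace ProbabilityTheory

lemma gaussianPDFReal_zero_one (t : ℝ) :
    gaussianPDFReal 0 1 t = (√(2 * π))⁻¹ * exp (-t ^ 2 / 2) := by
  simp [gaussianPDFReal]

lemma gaussianPDFReal_zero_one_le_of_abs_le {s t : ℝ} (h : |s| ≤ |t|) :
    gaussianPDFReal 0 1 t ≤ gaussianPDFReal 0 1 s := by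
  rw [gaussianPDFReal_zero_one, gaussianPDFReal_zero_one, ← sq_abs t, ← sq_abs s]
  gcongr

-- `|t| φ(t)` peaks at `t = 1`, with value `(2πe)^{-1/2} ≈ 0.242`.
lemma abs_mul_gaussianPDFReal_zero_one_le (t : ℝ) : |t| * gaussianPDFReal 0 1 t ≤ 1 / 4 := by
  have h_exp : |t| * exp (-t ^ 2 / 2) ≤ exp (-(1 / 2)) := calc
    |t| * exp (-t ^ 2 / 2) ≤ exp ((t ^ 2 - 1) / 2) * exp (-t ^ 2 / 2) := by
      gcongr
      calc |t| ≤ exp (|t| - 1) := by linarith [add_one_le_exp (|t| - 1)]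
        _ ≤ exp ((t ^ 2 - 1) / 2) := by gcongr; nlinarith [sq_abs t, sq_nonneg (|t| - 1)]
    _ = exp (-(1 / 2)) := by rw [← exp_add]; ring_nf
  have h_sq : exp (-(1 / 2)) ^ 2 * 16 ≤ 2 * π := by
    rw [← exp_nat_mul, show ((2 : ℕ) : ℝ) * -(1 / 2) = -1 by norm_num, exp_neg,
      inv_mul_le_iff₀ (exp_pos 1)]
    nlinarith [exp_one_gt_d9, pi_gt_three]
  have h_sqrt : 4 * exp (-(1 / 2)) ≤ √(2 * π) :=
    (le_sqrt (by positivity) (by positivity)).2 (by nlinarith)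
  rw [gaussianPDFReal_zero_one, ← mul_assoc, mul_comm |t|, mul_assoc,
    inv_mul_le_iff₀ (by positivity)]
  linarith

lemma cdf_gaussianReal_sub_cdf (m : ℝ) {v : ℝ≥0} (hv : v ≠ 0) (a b : ℝ) :
    cdf (gaussianReal m v) b - cdf (gaussianReal m v) a = ∫ x in a..b, gaussianPDFReal m v x := by
  wlog hab : a ≤ b generalizing a b
  · rw [intervalIntegral.integral_symm, ← this b a (le_of_not_ge hab), neg_sub]
  rw [intervalIntegral.integral_of_le hab,
    ← ENNReal.ofReal_eq_ofReal_iff (sub_nonneg.2 (monotone_cdf _ hab))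
      (setIntegral_nonneg measurableSet_Ioc fun t _ ↦ gaussianPDFReal_nonneg m v t),
    ← gaussianReal_apply_eq_integral m hv, ← StieltjesFunction.measure_Ioc, measure_cdf]

lemma abs_cdf_gaussianReal_sub_le (m : ℝ) {v : ℝ≥0} (hv : v ≠ 0) {a b C : ℝ}
    (hC : ∀ t ∈ uIoc a b, gaussianPDFReal m v t ≤ C) :
    |cdf (gaussianReal m v) b - cdf (gaussianReal m v) a| ≤ C * |b - a| := by
  rw [cdf_gaussianReal_sub_cdf m hv]
  refine (Real.norm_eq_abs _).symm.trans_le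
    (intervalIntegral.norm_integral_le_of_norm_le_const fun t ht ↦ ?_)
  rw [Real.norm_of_nonneg (gaussianPDFReal_nonneg m v t)]
  exact hC t ht

lemma cdf_gaussianReal_zero_apply_zero {v : ℝ≥0} (hv : v ≠ 0) :
    cdf (gaussianReal 0 v) 0 = 1 / 2 := by
  have h_neg : (gaussianReal 0 v).map (fun x ↦ -x) = gaussianReal 0 v := by
    rw [gaussianReal_map_neg, neg_zero]
  have h_symm : (gaussianReal 0 v).real (Iic 0) = (gaussianReal 0 v).real (Ioi 0) := by
    rw [measureReal_congr (Ioi_ae_eq_Ici' (gaussianReal_absolutelyContinuous 0 hv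
      Real.volume_singleton))]
    conv_lhs => rw [← h_neg, map_measureReal_apply measurable_neg measurableSet_Iic]
    simp
  have h_compl : (gaussianReal 0 v).real (Ioi 0) = 1 - (gaussianReal 0 v).real (Iic 0) := by
    rw [← compl_Iic, measureReal_compl measurableSet_Iic, probReal_univ]
  rw [cdf_eq_real]
  linarith

lemma abs_cdf_gaussianReal_sub_le_half {v : ℝ≥0} (hv : v ≠ 0) {w z : ℝ} (hwz : 0 ≤ w * z) :
    |cdf (gaussianReal 0 v) w - cdf (gaussianReal 0 v) z| ≤ 1 / 2 := by
  have h_half := cdf_gaussianReal_zero_apply_zero hv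
  have h_mono := monotone_cdf (gaussianReal 0 v)
  rw [abs_sub_le_iff]
  rcases mul_nonneg_iff.1 hwz with ⟨hw, hz⟩ | ⟨hw, hz⟩ <;> constructor <;>
    linarith [h_mono hw, h_mono hz, cdf_le_one (gaussianReal 0 v) w,
      cdf_le_one (gaussianReal 0 v) z, cdf_nonneg (gaussianReal 0 v) w,
      cdf_nonneg (gaussianReal 0 v) z]

lemma one_sub_mul_abs_le_abs_of_mem_uIoc {ε w z t : ℝ} (hwz : |w - z| ≤ ε * |z|)
    (ht : t ∈ uIoc w z) : (1 - ε) * |z| ≤ |t| := by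
  rw [mem_uIoc] at ht
  rcases le_total 0 z with hz | hz
  · rw [abs_of_nonneg hz] at hwz ⊢
    rw [abs_le] at hwz
    refine le_abs.2 (Or.inl ?_)
    rcases ht with ⟨h1, h2⟩ | ⟨h1, h2⟩ <;> nlinarith
  · rw [abs_of_nonpos hz] at hwz ⊢
    rw [abs_le] at hwz
    refine le_abs.2 (Or.inr ?_)
    rcases ht with ⟨h1, h2⟩ | ⟨h1, h2⟩ <;> nlinarith

lemma abs_cdf_gaussianReal_sub_le_of_abs_sub_le {ε w z : ℝ} (hε0 : 0 ≤ ε) (hε1 : ε < 1)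
    (hwz : |w - z| ≤ ε * |z|) :
    |cdf (gaussianReal 0 1) w - cdf (gaussianReal 0 1) z| ≤ ε := by
  rcases le_or_gt (1 / 2) ε with hε | hε
  · refine (abs_cdf_gaussianReal_sub_le_half one_ne_zero ?_).trans hε
    have : -((w - z) * z) ≤ ε * z ^ 2 := calc
      -((w - z) * z) ≤ |w - z| * |z| := (neg_le_abs _).trans (abs_mul _ _).le
      _ ≤ ε * |z| * |z| := by gcongr
      _ = ε * z ^ 2 := by rw [mul_assoc, ← sq, sq_abs]
    nlinarith
  set m := (1 - ε) * |z|
  have hm : 0 ≤ m := by positivity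
  have h_pdf : |z| * gaussianPDFReal 0 1 m ≤ 1 / 2 := by
    have := abs_mul_gaussianPDFReal_zero_one_le m
    rw [abs_of_nonneg hm] at this
    nlinarith [gaussianPDFReal_nonneg 0 1 m]
  calc |cdf (gaussianReal 0 1) w - cdf (gaussianReal 0 1) z|
      ≤ gaussianPDFReal 0 1 m * |w - z| := by
        refine abs_cdf_gaussianReal_sub_le 0 one_ne_zero fun t ht ↦
          gaussianPDFReal_zero_one_le_of_abs_le ?_
        rw [abs_of_nonneg hm]
        exact one_sub_mul_abs_le_abs_of_mem_uIoc hwz (uIoc_comm z w ▸ ht)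
    _ ≤ gaussianPDFReal 0 1 m * (ε * |z|) := by gcongr; exact gaussianPDFReal_nonneg 0 1 m
    _ ≤ ε := by nlinarith

end ProbabilityTheory

section Ratio

variable {x y z ε : ℝ}

lemma le_add_mul_abs_of_div_le (hε : ε < 1) (hy : |y - 1| ≤ ε) (h : x / y ≤ z) :
    x ≤ z + ε * |z| := by
  have hy_pos : 0 < y := by linarith [(abs_le.1 hy).1]
  calc x ≤ z + z * (y - 1) := by linarith [(div_le_iff₀ hy_pos).1 h]
    _ ≤ z + |z| * |y - 1| := by linarith [le_abs_self (z * (y - 1)), abs_mul z (y - 1)]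
    _ ≤ z + ε * |z| := by nlinarith [abs_nonneg z]

lemma div_le_of_le_sub_mul_abs (hε : ε < 1) (hy : |y - 1| ≤ ε) (h : x ≤ z - ε * |z|) :
    x / y ≤ z := by
  have hy_pos : 0 < y := by linarith [(abs_le.1 hy).1]
  rw [div_le_iff₀ hy_pos]
  calc x ≤ z - ε * |z| := h
    _ ≤ z - |z| * |y - 1| := by nlinarith [abs_nonneg z]
    _ ≤ z + z * (y - 1) := by linarith [neg_abs_le (z * (y - 1)), abs_mul z (y - 1)]
    _ = z * y := by ring

variable {Ω : Type*} (X Z : Ω → ℝ)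

lemma setOf_div_le_subset_union (hε : ε < 1) (z : ℝ) :
    {ω | X ω / Z ω ≤ z} ⊆ {ω | X ω ≤ z + ε * |z|} ∪ {ω | ε < |Z ω - 1|} := fun ω hω ↦
  (le_or_gt |Z ω - 1| ε).imp (fun hZ ↦ le_add_mul_abs_of_div_le hε hZ hω) id

lemma setOf_le_subset_union_setOf_div_le (hε : ε < 1) (z : ℝ) :
    {ω | X ω ≤ z - ε * |z|} ⊆ {ω | X ω / Z ω ≤ z} ∪ {ω | ε < |Z ω - 1|} := fun ω hω ↦
  (le_or_gt |Z ω - 1| ε).imp (fun hZ ↦ div_le_of_le_sub_mul_abs hε hZ hω) id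

end Ratio

theorem michel_pfanzagl_general {Ω : Type*} [MeasurableSpace Ω] (μ : Measure Ω)
    [IsProbabilityMeasure μ] (X Z : Ω → ℝ) :
    ∀ ε > (0 : ℝ),
      (⨆ z : ℝ, |(μ {ω | X ω / Z ω ≤ z}).toReal - ((gaussianReal 0 1) (Iic z)).toReal|)
        ≤ (⨆ z : ℝ, |(μ {ω | X ω ≤ z}).toReal - ((gaussianReal 0 1) (Iic z)).toReal|)
          + (μ {ω | ε < |Z ω - 1|}).toReal + ε := by
  intro ε hε
  simp only [← measureReal_def, ← cdf_eq_real]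
  set Φ := cdf (gaussianReal 0 1)
  have h_unit (s : Set Ω) (z : ℝ) : |μ.real s - Φ z| ≤ 1 :=
    abs_sub_le_of_nonneg_of_le measureReal_nonneg measureReal_le_one (cdf_nonneg _ z)
      (cdf_le_one _ z)
  have h_kolmogorov (w : ℝ) :
      |μ.real {ω | X ω ≤ w} - Φ w| ≤ ⨆ z, |μ.real {ω | X ω ≤ z} - Φ z| :=
    le_ciSup ⟨1, forall_mem_range.2 fun z ↦ h_unit {ω | X ω ≤ z} z⟩ w
  have h_bad_nonneg : 0 ≤ μ.real {ω | ε < |Z ω - 1|} := measureReal_nonneg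
  refine ciSup_le fun z ↦ ?_
  rcases lt_or_ge ε 1 with hε1 | hε1
  · have h_shift : |(ε * |z|)| = ε * |z| := abs_of_nonneg (by positivity)
    have h_up := (measureReal_mono (μ := μ) (setOf_div_le_subset_union X Z hε1 z)).trans
      (measureReal_union_le _ _)
    have h_low :=
      (measureReal_mono (μ := μ) (setOf_le_subset_union_setOf_div_le X Z hε1 z)).trans
        (measureReal_union_le _ _)
    have k_up := abs_le.1 (h_kolmogorov (z + ε * |z|))
    have k_low := abs_le.1 (h_kolmogorov (z - ε * |z|))
    have g_up := abs_le.1 (abs_cdf_gaussianReal_sub_le_of_abs_sub_le hε.le hε1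
      (w := z + ε * |z|) (by rw [add_sub_cancel_left, h_shift]))
    have g_low := abs_le.1 (abs_cdf_gaussianReal_sub_le_of_abs_sub_le hε.le hε1
      (w := z - ε * |z|) (by rw [sub_sub_cancel_left, abs_neg, h_shift]))
    rw [abs_sub_le_iff]
    constructor <;> linarith
  · linarith [h_unit {ω | X ω / Z ω ≤ z} z, (abs_nonneg _).trans (h_kolmogorov 0)]

/-- Michel–Pfanzagl lemma: Kolmogorov distance bound for a ratio. -/
theorem michel_pfanzagl {Ω : Type*} [MeasurableSpace Ω] (μ : Measure Ω)
    [IsProbabilityMeasure μ] (X Z : Ω → ℝ) (hZ : 0 < μ {ω | 0 < Z ω}) :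
    ∀ ε > (0 : ℝ),
      (⨆ z : ℝ, |(μ {ω | X ω / Z ω ≤ z}).toReal - ((gaussianReal 0 1) (Iic z)).toReal|)
        ≤ (⨆ z : ℝ, |(μ {ω | X ω ≤ z}).toReal - ((gaussianReal 0 1) (Iic z)).toReal|)
          + (μ {ω | ε < |Z ω - 1|}).toReal + ε :=
  michel_pfanzagl_general μ X Z
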